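/- Let G = (V, E) be a graph with V = {1,...,n}, and fix k ≥ 1. Define p_i(x_i) = ∏_{j=1}^n (x_i − j) for i = 1,...,k, D = ∏_{1 ≤ i ≠ j ≤ k} (x_i − x_j), and f = ∏_{1≤i≠j≤k} ∏_{(u,v)∈E} [(x_i − u)² + (x_j − v)²]·[(x_j − u)² + (x_i − v)²] over ℚ. Then f·D ∉ ⟨p_1(x_1),...,p_k(x_k)⟩ if and only if G has an independent set of size k. -/

import Mathlib

/-!
By Alon's Combinatorial Nullstellensatz, a polynomial lies in `⟨p_1, …, p_k⟩` if and only if it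
vanishes on the grid `{1, …, n}^k`. At the grid point `(ι 1, …, ι k)` the factor `D` is nonzero
exactly when `ι` is injective, and `f` is nonzero exactly when no pair `(ι a, ι b)` with `a ≠ b`
is an edge, because a sum of two rational squares vanishes only when both squares do. Hence `f·D`
is outside the ideal if and only if some injective `ι` hits no edge.
-/

open MvPolynomial Finset

namespace MvPolynomial

variable {R σ : Type*} [CommRing R]

theorem eval_eq_zero_of_mem_span_prod_X_sub_C (S : σ → Finset R) {f : MvPolynomial σ R}
    (hf : f ∈ Ideal.span (Set.range fun i => ∏ s ∈ S i, (X i - C s)))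
    {x : σ → R} (hx : ∀ i, x i ∈ S i) : eval x f = 0 := by
  suffices Ideal.span (Set.range fun i => ∏ s ∈ S i, (X i - C s)) ≤ RingHom.ker (eval x) from
    this hf
  rw [Ideal.span_le]
  rintro _ ⟨i, rfl⟩
  simpa [map_prod] using prod_eq_zero (hx i) (sub_self (x i))

theorem mem_span_prod_X_sub_C_iff [IsDomain R] [Finite σ] (S : σ → Finset R)
    (f : MvPolynomial σ R) :
    f ∈ Ideal.span (Set.range fun i => ∏ s ∈ S i, (X i - C s)) ↔
      ∀ x : σ → R, (∀ i, x i ∈ S i) → eval x f = 0 := by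
  refine ⟨fun hf x hx => eval_eq_zero_of_mem_span_prod_X_sub_C S hf hx, fun hf => ?_⟩
  by_cases hS : ∀ i, (S i).Nonempty
  · obtain ⟨h, -, rfl⟩ := combinatorial_nullstellensatz_exists_linearCombination S hS f hf
    rw [Ideal.span, ← Finsupp.range_linearCombination]
    exact LinearMap.mem_range_self _ h
  · obtain ⟨i, hi⟩ := not_forall.mp hS
    rw [not_nonempty_iff_eq_empty] at hi
    have h1 : (1 : MvPolynomial σ R) ∈ Set.range fun i => ∏ s ∈ S i, (X i - C s) :=
      ⟨i, by simp [hi]⟩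
    rw [(Ideal.eq_top_iff_one _).mpr (Ideal.subset_span h1)]
    exact Submodule.mem_top

end MvPolynomial

theorem Finset.forall_pi_mem_image_iff {α β σ : Type*} [DecidableEq β] (s : Finset α) (g : α → β)
    (P : (σ → β) → Prop) :
    (∀ x : σ → β, (∀ i, x i ∈ s.image g) → P x) ↔ ∀ ι : σ → α, (∀ i, ι i ∈ s) → P (g ∘ ι) := by
  refine ⟨fun h ι hι => h _ fun i => mem_image_of_mem g (hι i), fun h x hx => ?_⟩
  choose ι hι hgι using fun i => mem_image.mp (hx i)
  exact funext hgι ▸ h ι hι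

section IndependentSetPolynomial

variable {n k : ℕ}

-- The vertex `v : Fin n` is the paper's vertex `v + 1 ∈ {1, …, n}`.
def vertexLabel (v : Fin n) : ℚ := ((v : ℕ) : ℚ) + 1

theorem vertexLabel_injective : Function.Injective (vertexLabel (n := n)) := by
  intro u v h
  simpa [vertexLabel, Fin.val_inj] using h

noncomputable def edgePolynomial (k : ℕ) (E : Finset (Fin n × Fin n)) :
    MvPolynomial (Fin k) ℚ :=
  ∏ q ∈ univ.filter (fun q : Fin k × Fin k => q.1 ≠ q.2),
    ∏ uv ∈ E,
      (((X q.1 - C ((uv.1 : ℕ) + 1 : ℚ)) ^ 2 + (X q.2 - C ((uv.2 : ℕ) + 1 : ℚ)) ^ 2) *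
        ((X q.2 - C ((uv.1 : ℕ) + 1 : ℚ)) ^ 2 + (X q.1 - C ((uv.2 : ℕ) + 1 : ℚ)) ^ 2))

noncomputable def diffPolynomial (k : ℕ) : MvPolynomial (Fin k) ℚ :=
  ∏ q ∈ univ.filter (fun q : Fin k × Fin k => q.1 ≠ q.2), (X q.1 - X q.2)

theorem prod_range_X_sub_C_eq_prod_image_vertexLabel (i : Fin k) :
    ∏ j ∈ range n, ((X i : MvPolynomial (Fin k) ℚ) - C ((j : ℚ) + 1)) =
      ∏ s ∈ univ.image (vertexLabel (n := n)), (X i - C s) := by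
  rw [prod_image fun u _ v _ h => vertexLabel_injective h]
  exact (Fin.prod_univ_eq_prod_range
    (fun j => (X i : MvPolynomial (Fin k) ℚ) - C ((j : ℚ) + 1)) n).symm

theorem eval_vertexLabel_sq_add_sq_eq_zero_iff (ι : Fin k → Fin n) (a b : Fin k)
    (uv : Fin n × Fin n) :
    eval (vertexLabel ∘ ι)
        ((X a - C ((uv.1 : ℕ) + 1 : ℚ)) ^ 2 + (X b - C ((uv.2 : ℕ) + 1 : ℚ)) ^ 2) = 0 ↔
      (ι a, ι b) = uv := by
  simp only [map_add, map_pow, map_sub, eval_X, eval_C, Function.comp_apply]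
  change (vertexLabel (ι a) - vertexLabel uv.1) ^ 2 + (vertexLabel (ι b) - vertexLabel uv.2) ^ 2
    = 0 ↔ _
  rw [add_eq_zero_iff_of_nonneg (sq_nonneg _) (sq_nonneg _)]
  simp only [sq_eq_zero_iff, sub_eq_zero, vertexLabel_injective.eq_iff, Prod.ext_iff]

theorem eval_edgePolynomial_ne_zero_iff (E : Finset (Fin n × Fin n)) (ι : Fin k → Fin n) :
    eval (vertexLabel ∘ ι) (edgePolynomial k E) ≠ 0 ↔ ∀ a b, a ≠ b → (ι a, ι b) ∉ E := by
  simp only [edgePolynomial, eval_prod, prod_ne_zero_iff, eval_mul, mul_ne_zero_iff, ne_eq,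
    eval_vertexLabel_sq_add_sq_eq_zero_iff, mem_filter, mem_univ, true_and]
  refine ⟨fun h a b hab hE => (h (a, b) hab _ hE).1 rfl, ?_⟩
  rintro h ⟨a, b⟩ hab uv huv
  refine ⟨?_, ?_⟩
  · rintro rfl; exact h a b hab huv
  · rintro rfl; exact h b a (Ne.symm hab) huv

theorem eval_diffPolynomial_ne_zero_iff (ι : Fin k → Fin n) :
    eval (vertexLabel ∘ ι) (diffPolynomial k) ≠ 0 ↔ Function.Injective ι := by
  simp only [diffPolynomial, eval_prod, prod_ne_zero_iff, eval_sub, eval_X, Function.comp_apply,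
    sub_ne_zero, vertexLabel_injective.ne_iff, mem_filter, mem_univ, true_and, Prod.forall]
  exact ⟨fun h a b => not_imp_not.mp (h a b), fun h a b => h.ne⟩

end IndependentSetPolynomial

theorem stmt_15_general (n k : ℕ) (E : Finset (Fin n × Fin n)) :
    (∏ q ∈ Finset.univ.filter (fun q : Fin k × Fin k => q.1 ≠ q.2),
        ∏ uv ∈ E,
          (((X q.1 - C ((uv.1 : ℕ) + 1 : ℚ)) ^ 2 + (X q.2 - C ((uv.2 : ℕ) + 1 : ℚ)) ^ 2) *
            ((X q.2 - C ((uv.1 : ℕ) + 1 : ℚ)) ^ 2 + (X q.1 - C ((uv.2 : ℕ) + 1 : ℚ)) ^ 2))) *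
      (∏ q ∈ Finset.univ.filter (fun q : Fin k × Fin k => q.1 ≠ q.2),
        ((X q.1 : MvPolynomial (Fin k) ℚ) - X q.2)) ∉
      Ideal.span (Set.range fun i : Fin k =>
        ∏ j ∈ Finset.range n, ((X i : MvPolynomial (Fin k) ℚ) - C ((j : ℚ) + 1))) ↔
    ∃ ι : Fin k → Fin n, Function.Injective ι ∧
      ∀ a b : Fin k, a ≠ b → (ι a, ι b) ∉ E := by
  change edgePolynomial k E * diffPolynomial k ∉ _ ↔ _
  simp only [prod_range_X_sub_C_eq_prod_image_vertexLabel, mem_span_prod_X_sub_C_iff,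
    Finset.forall_pi_mem_image_iff, mem_univ, implies_true, forall_const, not_forall,
    eval_mul, ← ne_eq, mul_ne_zero_iff, eval_edgePolynomial_ne_zero_iff,
    eval_diffPolynomial_ne_zero_iff, and_comm]

theorem stmt_15 (n k : ℕ) (hk : 1 ≤ k) (E : Finset (Fin n × Fin n)) :
    (∏ q ∈ Finset.univ.filter (fun q : Fin k × Fin k => q.1 ≠ q.2),
        ∏ uv ∈ E,
          (((X q.1 - C ((uv.1 : ℕ) + 1 : ℚ)) ^ 2 + (X q.2 - C ((uv.2 : ℕ) + 1 : ℚ)) ^ 2) *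
            ((X q.2 - C ((uv.1 : ℕ) + 1 : ℚ)) ^ 2 + (X q.1 - C ((uv.2 : ℕ) + 1 : ℚ)) ^ 2))) *
      (∏ q ∈ Finset.univ.filter (fun q : Fin k × Fin k => q.1 ≠ q.2),
        ((X q.1 : MvPolynomial (Fin k) ℚ) - X q.2)) ∉
      Ideal.span (Set.range fun i : Fin k =>
        ∏ j ∈ Finset.range n, ((X i : MvPolynomial (Fin k) ℚ) - C ((j : ℚ) + 1))) ↔
    ∃ ι : Fin k → Fin n, Function.Injective ι ∧
      ∀ a b : Fin k, a ≠ b → (ι a, ι b) ∉ E :=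
  stmt_15_general n k E
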